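/- Let u < 0 and set d = E(u) - u, where E is the inverse Mills ratio. Suppose that H(u) := u²·d + 6u·d² + 6d³ - u - 4d = 0. Set r = -u/d. Then r ∈ (0, 1), d² = (4 - r)/(r² - 6r + 6), and g(u) = r·(4 - r)·(1 - r)² / (r² - 6r + 6)², where g(u) = E(u)²·(3·E(u)² - 4·u·E(u) + u² - 2). -/

import Mathlib

open MeasureTheory Real Filter

/-- The standard normal density. -/
noncomputable def gphi (u : ℝ) : ℝ := Real.exp (-u ^ 2 / 2) / Real.sqrt (2 * Real.pi)

/-- The standard normal CDF. -/
noncomputable def gPhi (u : ℝ) : ℝ := ∫ s in Set.Iic u, gphi s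

/-- The standard normal tail. -/
noncomputable def gPhiBar (u : ℝ) : ℝ := 1 - gPhi u

/-- The inverse Mills ratio. -/
noncomputable def mills (u : ℝ) : ℝ := gphi u / gPhiBar u

/-- P(r) = E[tanh²(√r Z)]. -/
noncomputable def Pfun (r : ℝ) : ℝ := ∫ z : ℝ, Real.tanh (Real.sqrt r * z) ^ 2 * gphi z

/-- B(q). -/
noncomputable def Bfun (κ q : ℝ) : ℝ :=
  (1 - q) * ∫ z : ℝ, mills ((κ - Real.sqrt q * z) / Real.sqrt (1 - q)) ^ 2 * gphi z

/-- C_κ. -/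
noncomputable def Ckappa (κ : ℝ) : ℝ := ∫ z : ℝ, max (κ - z) 0 ^ 2 * gphi z

/-- The critical capacity. -/
noncomputable def alphac (κ : ℝ) : ℝ := 2 / (Real.pi * Ckappa κ)

/-- g(u) = E(u)²(3E(u)² - 4uE(u) + u² - 2). -/
noncomputable def gfun (u : ℝ) : ℝ :=
  mills u ^ 2 * (3 * mills u ^ 2 - 4 * u * mills u + u ^ 2 - 2)

/-!
The only analytic input is E(u) > 0, i.e. that the Gaussian tail is positive; it gives
d = E - u > 0 and r = -u/d ∈ (0, 1). The rest is algebra in the coordinates (d, r), where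
u = -r d and E = (1 - r) d: there H = d (d² (r² - 6r + 6) - (4 - r)), and
g = d² (1 - r)² (d² (3 - 2r) - 2), into which d² = (4 - r)/(r² - 6r + 6) is substituted using
(4 - r)(3 - 2r) - 2 (r² - 6r + 6) = r.
-/

open ProbabilityTheory

lemma gphi_eq_gaussianPDFReal : gphi = gaussianPDFReal 0 1 := by
  ext x
  simp [gphi, gaussianPDFReal, div_eq_inv_mul]

lemma gPhiBar_eq_integral_Ioi (u : ℝ) : gPhiBar u = ∫ s in Set.Ioi u, gphi s := by
  have hint : Integrable gphi := gphi_eq_gaussianPDFReal ▸ integrable_gaussianPDFReal 0 1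
  have hsplit := intervalIntegral.integral_Iic_add_Ioi (b := u) hint.integrableOn hint.integrableOn
  rw [gphi_eq_gaussianPDFReal, integral_gaussianPDFReal_eq_one 0 one_ne_zero] at hsplit
  rw [gPhiBar, gPhi, ← hsplit, gphi_eq_gaussianPDFReal, add_sub_cancel_left]

lemma gPhiBar_pos (u : ℝ) : 0 < gPhiBar u := by
  rw [gPhiBar_eq_integral_Ioi, gphi_eq_gaussianPDFReal]
  rw [setIntegral_pos_iff_support_of_nonneg_ae (ae_of_all _ (gaussianPDFReal_nonneg 0 1))
    (integrable_gaussianPDFReal 0 1).integrableOn]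
  have hsupp : Function.support (gaussianPDFReal 0 1) = Set.univ :=
    Function.support_eq_univ fun x => (gaussianPDFReal_pos 0 1 x one_ne_zero).ne'
  simp [hsupp]

lemma mills_pos (u : ℝ) : 0 < mills u := by
  have hphi : 0 < gphi u := gphi_eq_gaussianPDFReal ▸ gaussianPDFReal_pos 0 1 u one_ne_zero
  exact div_pos hphi (gPhiBar_pos u)

lemma neg_div_sub_mem_Ioo {u E : ℝ} (hu : u < 0) (hE : 0 < E) : -u / (E - u) ∈ Set.Ioo 0 1 := by
  have hd : 0 < E - u := by linarith
  exact ⟨div_pos (neg_pos.2 hu) hd, (div_lt_one hd).2 (by linarith)⟩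

lemma quad_pos_of_lt_one {r : ℝ} (hr : r < 1) : 0 < r ^ 2 - 6 * r + 6 := by
  have h : 0 < (1 - r) * (5 - r) := mul_pos (by linarith) (by linarith)
  linear_combination h

section RatioCoordinates

variable {d r : ℝ}

lemma sq_mul_quad_eq_of_H (hd : d ≠ 0)
    (hH : (-(r * d)) ^ 2 * d + 6 * (-(r * d)) * d ^ 2 + 6 * d ^ 3 - -(r * d) - 4 * d = 0) :
    d ^ 2 * (r ^ 2 - 6 * r + 6) = 4 - r := by
  have hfac : d * (d ^ 2 * (r ^ 2 - 6 * r + 6) - (4 - r)) = 0 := by linear_combination hH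
  linear_combination (mul_eq_zero.1 hfac).resolve_left hd

lemma g_eq_of_sq_mul_quad_eq (hQ : r ^ 2 - 6 * r + 6 ≠ 0) (h : d ^ 2 * (r ^ 2 - 6 * r + 6) = 4 - r) :
    ((1 - r) * d) ^ 2 * (3 * ((1 - r) * d) ^ 2 - 4 * -(r * d) * ((1 - r) * d) + (-(r * d)) ^ 2 - 2)
      = r * (4 - r) * (1 - r) ^ 2 / (r ^ 2 - 6 * r + 6) ^ 2 := by
  rw [eq_div_iff (pow_ne_zero 2 hQ)]
  linear_combination ((1 - r) ^ 2 * (3 - 2 * r) * (d ^ 2 * (r ^ 2 - 6 * r + 6) + (4 - r))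
    - 2 * (1 - r) ^ 2 * (r ^ 2 - 6 * r + 6)) * h

end RatioCoordinates

theorem stmt_17 (u : ℝ) (hu : u < 0)
    (hH : u ^ 2 * (mills u - u) + 6 * u * (mills u - u) ^ 2
        + 6 * (mills u - u) ^ 3 - u - 4 * (mills u - u) = 0) :
    (-u / (mills u - u)) ∈ Set.Ioo (0 : ℝ) 1 ∧
    (mills u - u) ^ 2
      = (4 - (-u / (mills u - u)))
        / ((-u / (mills u - u)) ^ 2 - 6 * (-u / (mills u - u)) + 6) ∧
    gfun u
      = (-u / (mills u - u)) * (4 - (-u / (mills u - u)))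
          * (1 - (-u / (mills u - u))) ^ 2
        / ((-u / (mills u - u)) ^ 2 - 6 * (-u / (mills u - u)) + 6) ^ 2 := by
  have hr := neg_div_sub_mem_Ioo hu (mills_pos u)
  have hd : mills u - u ≠ 0 := by linarith [mills_pos u]
  set d := mills u - u with hd_def
  set r := -u / d
  have hu_eq : u = -(r * d) := by rw [div_mul_cancel₀ _ hd, neg_neg]
  clear_value r d
  have hE_eq : mills u = (1 - r) * d := by linear_combination hu_eq - hd_def
  have hQ := quad_pos_of_lt_one hr.2
  rw [hu_eq] at hH
  have hkey := sq_mul_quad_eq_of_H hd hH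
  refine ⟨hr, (eq_div_iff hQ.ne').2 hkey, ?_⟩
  rw [gfun, hE_eq, hu_eq]
  exact g_eq_of_sq_mul_quad_eq hQ.ne' hkey
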